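/- Positive focal substitution: if Γ ⊢ [A⁺] (right focus on A⁺) is derivable and Γ, ⟨A⁺⟩ ; L ⊢ U is derivable in the focused sequent calculus for polarized intuitionistic logic, then Γ ; L ⊢ U is derivable. -/
import Mathlib


namespace StructuralFocalization

/- Polarized propositional intuitionistic logic -/
mutual
inductive PProp : Type
  | atom : Nat → PProp
  | down : NProp → PProp
  | bot  : PProp
  | or   : PProp → PProp → PProp
  | top  : PProp
  | and  : PProp → PProp → PProp
inductive NProp : Type
  | atom : Nat → NProp
  | up   : PProp → NProp
  | imp  : PProp → NProp → NProp
  | top  : NProp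
  | and  : NProp → NProp → NProp
end

/- Hypotheses: negative propositions or suspended positives ⟨A⁺⟩ -/
inductive Hyp : Type
  | neg  : NProp → Hyp
  | susp : PProp → Hyp

/- Succedents: A⁺, A⁻, or suspended ⟨A⁻⟩ -/
inductive Succ : Type
  | pos  : PProp → Succ
  | neg  : NProp → Succ
  | susp : NProp → Succ

abbrev Ctx := List Hyp

def Succ.stable : Succ → Prop
  | .pos _ => True
  | .susp _ => True
  | .neg _ => False

def Hyp.suspNormal : Hyp → Prop
  | .susp (PProp.atom _) => True
  | .susp _ => False
  | .neg _ => True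

def Ctx.suspNormal (Γ : Ctx) : Prop := ∀ h ∈ Γ, h.suspNormal

def Succ.suspNormal : Succ → Prop
  | .susp (NProp.atom _) => True
  | .susp _ => False
  | _ => True

/- The focused sequent calculus (Figures 3 and 4 of "Structural focalization",
   with the generalized id⁺/id⁻ rules for arbitrary suspended propositions). -/
mutual
/-- Right focus: Γ ⊢ [A⁺] -/
inductive RFoc : Ctx → PProp → Prop
  | idP {Γ A} : Hyp.susp A ∈ Γ → RFoc Γ A
  | downR {Γ A} : Inv Γ [] (Succ.neg A) → RFoc Γ (PProp.down A)
  | orR1 {Γ A B} : RFoc Γ A → RFoc Γ (PProp.or A B)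
  | orR2 {Γ A B} : RFoc Γ B → RFoc Γ (PProp.or A B)
  | topR {Γ} : RFoc Γ PProp.top
  | andR {Γ A B} : RFoc Γ A → RFoc Γ B → RFoc Γ (PProp.and A B)
/-- Inversion: Γ ; Ω ⊢ U -/
inductive Inv : Ctx → List PProp → Succ → Prop
  | focR {Γ A} : RFoc Γ A → Inv Γ [] (Succ.pos A)
  | focL {Γ A U} : Hyp.neg A ∈ Γ → Succ.stable U → LFoc Γ A U → Inv Γ [] U
  | etaP {Γ p Ω U} : Inv (Hyp.susp (PProp.atom p) :: Γ) Ω U → Inv Γ (PProp.atom p :: Ω) U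
  | downL {Γ A Ω U} : Inv (Hyp.neg A :: Γ) Ω U → Inv Γ (PProp.down A :: Ω) U
  | botL {Γ Ω U} : Inv Γ (PProp.bot :: Ω) U
  | orL {Γ A B Ω U} : Inv Γ (A :: Ω) U → Inv Γ (B :: Ω) U → Inv Γ (PProp.or A B :: Ω) U
  | topPL {Γ Ω U} : Inv Γ Ω U → Inv Γ (PProp.top :: Ω) U
  | andPL {Γ A B Ω U} : Inv Γ (A :: B :: Ω) U → Inv Γ (PProp.and A B :: Ω) U
  | etaN {Γ p} : Inv Γ [] (Succ.susp (NProp.atom p)) → Inv Γ [] (Succ.neg (NProp.atom p))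
  | upR {Γ A} : Inv Γ [] (Succ.pos A) → Inv Γ [] (Succ.neg (NProp.up A))
  | impR {Γ A B} : Inv Γ [A] (Succ.neg B) → Inv Γ [] (Succ.neg (NProp.imp A B))
  | topNR {Γ} : Inv Γ [] (Succ.neg NProp.top)
  | andNR {Γ A B} : Inv Γ [] (Succ.neg A) → Inv Γ [] (Succ.neg B) →
      Inv Γ [] (Succ.neg (NProp.and A B))
/-- Left focus: Γ ; [A⁻] ⊢ U -/
inductive LFoc : Ctx → NProp → Succ → Prop
  | idN {Γ A} : LFoc Γ A (Succ.susp A)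
  | upL {Γ A U} : Inv Γ [A] U → LFoc Γ (NProp.up A) U
  | impL {Γ A B U} : RFoc Γ A → LFoc Γ B U → LFoc Γ (NProp.imp A B) U
  | andL1 {Γ A B U} : LFoc Γ A U → LFoc Γ (NProp.and A B) U
  | andL2 {Γ A B U} : LFoc Γ B U → LFoc Γ (NProp.and A B) U
end

/- Unpolarized propositions and Kleene's G3 -/
inductive UProp : Type
  | atom : Nat → UProp
  | bot  : UProp
  | or   : UProp → UProp → UProp
  | top  : UProp
  | and  : UProp → UProp → UProp
  | imp  : UProp → UProp → UProp

inductive G3 : List UProp → UProp → Prop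
  | init {Γ p} : UProp.atom p ∈ Γ → G3 Γ (UProp.atom p)
  | botL {Γ Q} : UProp.bot ∈ Γ → G3 Γ Q
  | orR1 {Γ A B} : G3 Γ A → G3 Γ (UProp.or A B)
  | orR2 {Γ A B} : G3 Γ B → G3 Γ (UProp.or A B)
  | orL {Γ A B Q} : UProp.or A B ∈ Γ → G3 (A :: Γ) Q → G3 (B :: Γ) Q → G3 Γ Q
  | topR {Γ} : G3 Γ UProp.top
  | andR {Γ A B} : G3 Γ A → G3 Γ B → G3 Γ (UProp.and A B)
  | andL1 {Γ A B Q} : UProp.and A B ∈ Γ → G3 (A :: Γ) Q → G3 Γ Q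
  | andL2 {Γ A B Q} : UProp.and A B ∈ Γ → G3 (B :: Γ) Q → G3 Γ Q
  | impR {Γ A B} : G3 (A :: Γ) B → G3 Γ (UProp.imp A B)
  | impL {Γ A B Q} : UProp.imp A B ∈ Γ → G3 Γ A → G3 (B :: Γ) Q → G3 Γ Q

/-- G3 with an ordered auxiliary context Ψ: Γ; Ψ ⊢ Q -/
inductive G3Psi : List UProp → List UProp → UProp → Prop
  | cons {Γ P Ψ Q} : G3Psi (P :: Γ) Ψ Q → G3Psi Γ (P :: Ψ) Q
  | nil {Γ Q} : G3 Γ Q → G3Psi Γ [] Q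

/- Erasure -/
mutual
def eraseP : PProp → UProp
  | .atom p => .atom p
  | .down A => eraseN A
  | .bot => .bot
  | .or A B => .or (eraseP A) (eraseP B)
  | .top => .top
  | .and A B => .and (eraseP A) (eraseP B)
def eraseN : NProp → UProp
  | .atom p => .atom p
  | .up A => eraseP A
  | .imp A B => .imp (eraseP A) (eraseN B)
  | .top => .top
  | .and A B => .and (eraseN A) (eraseN B)
end

def eraseHyp : Hyp → UProp
  | .neg A => eraseN A
  | .susp A => eraseP A

def eraseCtx (Γ : Ctx) : List UProp := Γ.map eraseHyp

def eraseSucc : Succ → UProp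
  | .pos A => eraseP A
  | .neg A => eraseN A
  | .susp A => eraseN A


abbrev W1 (Δ : Ctx) (C : PProp) (_ : RFoc Δ C) : Prop := ∀ Γ', Δ ⊆ Γ' → RFoc Γ' C
abbrev W2 (Δ : Ctx) (Ω : List PProp) (U : Succ) (_ : Inv Δ Ω U) : Prop :=
  ∀ Γ', Δ ⊆ Γ' → Inv Γ' Ω U
abbrev W3 (Δ : Ctx) (B : NProp) (U : Succ) (_ : LFoc Δ B U) : Prop :=
  ∀ Γ', Δ ⊆ Γ' → LFoc Γ' B U

theorem weakenR {Γ C} (h : RFoc Γ C) : ∀ Γ', Γ ⊆ Γ' → RFoc Γ' C :=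
  RFoc.rec (motive_1 := W1) (motive_2 := W2) (motive_3 := W3)
    (fun m Γ' s => .idP (s m))
    (fun _ ih Γ' s => .downR (ih _ s))
    (fun _ ih Γ' s => .orR1 (ih _ s))
    (fun _ ih Γ' s => .orR2 (ih _ s))
    (fun Γ' s => .topR)
    (fun _ _ ih ih2 Γ' s => .andR (ih _ s) (ih2 _ s))
    (fun _ ih Γ' s => .focR (ih _ s))
    (fun m st _ ih Γ' s => .focL (s m) st (ih _ s))
    (fun _ ih Γ' s => .etaP (ih _ (List.cons_subset_cons _ s)))
    (fun _ ih Γ' s => .downL (ih _ (List.cons_subset_cons _ s)))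
    (fun Γ' s => .botL)
    (fun _ _ ih ih2 Γ' s => .orL (ih _ s) (ih2 _ s))
    (fun _ ih Γ' s => .topPL (ih _ s))
    (fun _ ih Γ' s => .andPL (ih _ s))
    (fun _ ih Γ' s => .etaN (ih _ s))
    (fun _ ih Γ' s => .upR (ih _ s))
    (fun _ ih Γ' s => .impR (ih _ s))
    (fun Γ' s => .topNR)
    (fun _ _ ih ih2 Γ' s => .andNR (ih _ s) (ih2 _ s))
    (fun Γ' s => .idN)
    (fun _ ih Γ' s => .upL (ih _ s))
    (fun _ _ ih ih2 Γ' s => .impL (ih _ s) (ih2 _ s))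
    (fun _ ih Γ' s => .andL1 (ih _ s))
    (fun _ ih Γ' s => .andL2 (ih _ s))
    h

def Sub (A : PProp) (Δ Γ : Ctx) : Prop := ∀ h ∈ Δ, h = Hyp.susp A ∨ h ∈ Γ

theorem Sub.cons {A Δ Γ} (s : Sub A Δ Γ) (x : Hyp) : Sub A (x :: Δ) (x :: Γ) := by
  intro h hm
  cases hm with
  | head => exact Or.inr (.head _)
  | tail _ hm =>
    rcases s h hm with h1 | h1
    · exact Or.inl h1
    · exact Or.inr (.tail _ h1)

abbrev S1 (Δ : Ctx) (C : PProp) (_ : RFoc Δ C) : Prop :=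
  ∀ Γ A, RFoc Γ A → Sub A Δ Γ → RFoc Γ C
abbrev S2 (Δ : Ctx) (Ω : List PProp) (U : Succ) (_ : Inv Δ Ω U) : Prop :=
  ∀ Γ A, RFoc Γ A → Sub A Δ Γ → Inv Γ Ω U
abbrev S3 (Δ : Ctx) (B : NProp) (U : Succ) (_ : LFoc Δ B U) : Prop :=
  ∀ Γ A, RFoc Γ A → Sub A Δ Γ → LFoc Γ B U

section
variable {Δ : Ctx}

theorem case_idP {A1 : PProp} (m : Hyp.susp A1 ∈ Δ) :
    ∀ Γ A, RFoc Γ A → Sub A Δ Γ → RFoc Γ A1 := by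
  intro Γ A hA s
  rcases s _ m with h1 | h1
  · cases h1; exact hA
  · exact .idP h1

theorem case_focL {A1 : NProp} {U : Succ} (m : Hyp.neg A1 ∈ Δ) (st : U.stable)
    (ih : ∀ Γ A, RFoc Γ A → Sub A Δ Γ → LFoc Γ A1 U) :
    ∀ Γ A, RFoc Γ A → Sub A Δ Γ → Inv Γ [] U := by
  intro Γ A hA s
  rcases s _ m with h1 | h1
  · exact absurd h1 (by simp)
  · exact .focL h1 st (ih _ _ hA s)

theorem case_ext {x : Hyp} {P : Ctx → Prop}
    (ih : ∀ Γ A, RFoc Γ A → Sub A (x :: Δ) Γ → P Γ) :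
    ∀ Γ A, RFoc Γ A → Sub A Δ Γ → P (x :: Γ) :=
  fun Γ A hA s => ih _ _ (weakenR hA _ (List.subset_cons_self _ _)) (s.cons _)

end

theorem substR {Δ C} (h : RFoc Δ C) :
    ∀ Γ A, RFoc Γ A → Sub A Δ Γ → RFoc Γ C :=
  RFoc.rec (motive_1 := S1) (motive_2 := S2) (motive_3 := S3)
    (fun m => case_idP m)
    (fun _ ih Γ A hA s => .downR (ih _ _ hA s))
    (fun _ ih Γ A hA s => .orR1 (ih _ _ hA s))
    (fun _ ih Γ A hA s => .orR2 (ih _ _ hA s))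
    (fun Γ A hA s => .topR)
    (fun _ _ ih ih2 Γ A hA s => .andR (ih _ _ hA s) (ih2 _ _ hA s))
    (fun _ ih Γ A hA s => .focR (ih _ _ hA s))
    (fun m st _ ih => case_focL m st ih)
    (fun _ ih => fun Γ A hA s => .etaP (case_ext (P := fun Γ => Inv Γ _ _) ih Γ A hA s))
    (fun _ ih => fun Γ A hA s => .downL (case_ext (P := fun Γ => Inv Γ _ _) ih Γ A hA s))
    (fun Γ A hA s => .botL)
    (fun _ _ ih ih2 Γ A hA s => .orL (ih _ _ hA s) (ih2 _ _ hA s))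
    (fun _ ih Γ A hA s => .topPL (ih _ _ hA s))
    (fun _ ih Γ A hA s => .andPL (ih _ _ hA s))
    (fun _ ih Γ A hA s => .etaN (ih _ _ hA s))
    (fun _ ih Γ A hA s => .upR (ih _ _ hA s))
    (fun _ ih Γ A hA s => .impR (ih _ _ hA s))
    (fun Γ A hA s => .topNR)
    (fun _ _ ih ih2 Γ A hA s => .andNR (ih _ _ hA s) (ih2 _ _ hA s))
    (fun Γ A hA s => .idN)
    (fun _ ih Γ A hA s => .upL (ih _ _ hA s))
    (fun _ _ ih ih2 Γ A hA s => .impL (ih _ _ hA s) (ih2 _ _ hA s))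
    (fun _ ih Γ A hA s => .andL1 (ih _ _ hA s))
    (fun _ ih Γ A hA s => .andL2 (ih _ _ hA s))
    h

theorem substI {Δ Ω U} (h : Inv Δ Ω U) :
    ∀ Γ A, RFoc Γ A → Sub A Δ Γ → Inv Γ Ω U :=
  Inv.rec (motive_1 := S1) (motive_2 := S2) (motive_3 := S3)
    (fun m => case_idP m)
    (fun _ ih Γ A hA s => .downR (ih _ _ hA s))
    (fun _ ih Γ A hA s => .orR1 (ih _ _ hA s))
    (fun _ ih Γ A hA s => .orR2 (ih _ _ hA s))
    (fun Γ A hA s => .topR)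
    (fun _ _ ih ih2 Γ A hA s => .andR (ih _ _ hA s) (ih2 _ _ hA s))
    (fun _ ih Γ A hA s => .focR (ih _ _ hA s))
    (fun m st _ ih => case_focL m st ih)
    (fun _ ih => fun Γ A hA s => .etaP (case_ext (P := fun Γ => Inv Γ _ _) ih Γ A hA s))
    (fun _ ih => fun Γ A hA s => .downL (case_ext (P := fun Γ => Inv Γ _ _) ih Γ A hA s))
    (fun Γ A hA s => .botL)
    (fun _ _ ih ih2 Γ A hA s => .orL (ih _ _ hA s) (ih2 _ _ hA s))
    (fun _ ih Γ A hA s => .topPL (ih _ _ hA s))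
    (fun _ ih Γ A hA s => .andPL (ih _ _ hA s))
    (fun _ ih Γ A hA s => .etaN (ih _ _ hA s))
    (fun _ ih Γ A hA s => .upR (ih _ _ hA s))
    (fun _ ih Γ A hA s => .impR (ih _ _ hA s))
    (fun Γ A hA s => .topNR)
    (fun _ _ ih ih2 Γ A hA s => .andNR (ih _ _ hA s) (ih2 _ _ hA s))
    (fun Γ A hA s => .idN)
    (fun _ ih Γ A hA s => .upL (ih _ _ hA s))
    (fun _ _ ih ih2 Γ A hA s => .impL (ih _ _ hA s) (ih2 _ _ hA s))
    (fun _ ih Γ A hA s => .andL1 (ih _ _ hA s))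
    (fun _ ih Γ A hA s => .andL2 (ih _ _ hA s))
    h

theorem substL {Δ B U} (h : LFoc Δ B U) :
    ∀ Γ A, RFoc Γ A → Sub A Δ Γ → LFoc Γ B U :=
  LFoc.rec (motive_1 := S1) (motive_2 := S2) (motive_3 := S3)
    (fun m => case_idP m)
    (fun _ ih Γ A hA s => .downR (ih _ _ hA s))
    (fun _ ih Γ A hA s => .orR1 (ih _ _ hA s))
    (fun _ ih Γ A hA s => .orR2 (ih _ _ hA s))
    (fun Γ A hA s => .topR)
    (fun _ _ ih ih2 Γ A hA s => .andR (ih _ _ hA s) (ih2 _ _ hA s))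
    (fun _ ih Γ A hA s => .focR (ih _ _ hA s))
    (fun m st _ ih => case_focL m st ih)
    (fun _ ih => fun Γ A hA s => .etaP (case_ext (P := fun Γ => Inv Γ _ _) ih Γ A hA s))
    (fun _ ih => fun Γ A hA s => .downL (case_ext (P := fun Γ => Inv Γ _ _) ih Γ A hA s))
    (fun Γ A hA s => .botL)
    (fun _ _ ih ih2 Γ A hA s => .orL (ih _ _ hA s) (ih2 _ _ hA s))
    (fun _ ih Γ A hA s => .topPL (ih _ _ hA s))
    (fun _ ih Γ A hA s => .andPL (ih _ _ hA s))
    (fun _ ih Γ A hA s => .etaN (ih _ _ hA s))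
    (fun _ ih Γ A hA s => .upR (ih _ _ hA s))
    (fun _ ih Γ A hA s => .impR (ih _ _ hA s))
    (fun Γ A hA s => .topNR)
    (fun _ _ ih ih2 Γ A hA s => .andNR (ih _ _ hA s) (ih2 _ _ hA s))
    (fun Γ A hA s => .idN)
    (fun _ ih Γ A hA s => .upL (ih _ _ hA s))
    (fun _ _ ih ih2 Γ A hA s => .impL (ih _ _ hA s) (ih2 _ _ hA s))
    (fun _ ih Γ A hA s => .andL1 (ih _ _ hA s))
    (fun _ ih Γ A hA s => .andL2 (ih _ _ hA s))
    h


/-- Positive focal substitution (one-sequent view, covering all three sequent forms). -/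
theorem positive_focal_substitution {Γ : Ctx} {A : PProp} (h : RFoc Γ A) :
    (∀ C, RFoc (Hyp.susp A :: Γ) C → RFoc Γ C) ∧
    (∀ Ω U, Inv (Hyp.susp A :: Γ) Ω U → Inv Γ Ω U) ∧
    (∀ B U, LFoc (Hyp.susp A :: Γ) B U → LFoc Γ B U) := by
  have s : Sub A (Hyp.susp A :: Γ) Γ := by
    intro x hm
    cases hm with
    | head => exact Or.inl rfl
    | tail _ hm => exact Or.inr hm
  exact ⟨fun C d => substR d _ _ h s, fun Ω U d => substI d _ _ h s,
    fun B U d => substL d _ _ h s⟩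

end StructuralFocalization
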